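/- Consider an economy with a unique best cycle C run under an arbitrary sequence of splitting rules β(t). Suppose the product of weights along C equals 1 and every other cycle has product at most 1 − ε for some ε > 0. If there is an edge (j,i) ∈ C (j the predecessor of i) and a constant 0 ≤ γ < 1 such that for infinitely many rounds t the fraction β_{i,j}(t) received by player i from the good of player j is less than γ, then there exists a subsequence of rounds t_1 < t_2 < … along which the amount received by player i from good j, β_{i,j}(t_m)·x_j(t_m), tends to 0. -/

import Mathlib

open Filter

namespace ExpandingEconomy

/-- A (simple, directed) cycle: a nonempty list of distinct players, considered cyclically. -/
def IsCycle {n : ℕ} (C : List (Fin n)) : Prop := C ≠ [] ∧ C.Nodup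

/-- Product over the edges of a cycle `C` of `g successor predecessor`:
each player in `C` produces from the good of its predecessor in `C`. -/
noncomputable def cycleEdgeProd {n : ℕ} (C : List (Fin n)) (g : Fin n → Fin n → ℝ) : ℝ :=
  ∏ m : Fin C.length,
    g (C.get ⟨((m : ℕ) + 1) % C.length,
        Nat.mod_lt _ (Nat.lt_of_le_of_lt (Nat.zero_le _) m.isLt)⟩)
      (C.get m)

/-- The product of the production coefficients along a cycle. -/
noncomputable def cycleProd {n : ℕ} (a : Fin n → Fin n → ℝ) (C : List (Fin n)) : ℝ :=
  cycleEdgeProd C a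

/-- A good cycle: the product of weights along it is strictly greater than one. -/
def IsGoodCycle {n : ℕ} (a : Fin n → Fin n → ℝ) (C : List (Fin n)) : Prop :=
  IsCycle C ∧ 1 < cycleProd a C

/-- `(i, j)` is an edge of the cycle `C`: `j` is the predecessor of `i` in `C`. -/
def IsEdgeOf {n : ℕ} (C : List (Fin n)) (i j : Fin n) : Prop :=
  ∃ m : Fin C.length, C.get m = j ∧
    C.get ⟨((m : ℕ) + 1) % C.length,
      Nat.mod_lt _ (Nat.lt_of_le_of_lt (Nat.zero_le _) m.isLt)⟩ = i

/-- Geometric mean of a cycle (the `k`-th root of its product, `k` the length). -/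
noncomputable def geoMean {n : ℕ} (a : Fin n → Fin n → ℝ) (C : List (Fin n)) : ℝ :=
  cycleProd a C ^ ((C.length : ℝ)⁻¹)

/-- A best cycle: one whose geometric mean is maximal among all cycles. -/
def IsBestCycle {n : ℕ} (a : Fin n → Fin n → ℝ) (C : List (Fin n)) : Prop :=
  IsCycle C ∧ ∀ C', IsCycle C' → geoMean a C' ≤ geoMean a C

/-- `C` is the unique best cycle (up to rotation). -/
def UniqueBestCycle {n : ℕ} (a : Fin n → Fin n → ℝ) (C : List (Fin n)) : Prop :=
  IsBestCycle a C ∧ ∀ C', IsBestCycle a C' → C'.IsRotated C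

/-- The production matrix is nonnegative. -/
def Nonneg {n : ℕ} (a : Fin n → Fin n → ℝ) : Prop := ∀ i j, 0 ≤ a i j

/-- The economy is strongly connected: the digraph with an edge `j → i`
whenever `a i j > 0` is strongly connected. -/
def StronglyConnected {n : ℕ} (a : Fin n → Fin n → ℝ) : Prop :=
  ∀ i j : Fin n, Relation.ReflTransGen (fun u v => 0 < a v u) i j

/-- A mechanism: splitting fractions are nonnegative and sum to at most one on each good. -/
def IsMechanism {n : ℕ} (β : ℕ → Fin n → Fin n → ℝ) : Prop :=
  (∀ t i j, 0 ≤ β t i j) ∧ (∀ t j, ∑ i, β t i j ≤ 1)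

/-- A non-wasteful mechanism: fractions sum to one and useless goods are not allocated. -/
def NonWasteful {n : ℕ} (a : Fin n → Fin n → ℝ) (β : ℕ → Fin n → Fin n → ℝ) : Prop :=
  (∀ t j, ∑ i, β t i j = 1) ∧ (∀ t i j, a i j = 0 → β t i j = 0)

/-- The amounts evolve under the splitting rules `β`. -/
def MechEvolution {n : ℕ} (a : Fin n → Fin n → ℝ) (β : ℕ → Fin n → Fin n → ℝ)
    (x : ℕ → Fin n → ℝ) : Prop :=
  ∀ t i, x (t + 1) i = ∑ j, a i j * β t i j * x t j

/-- Amount of good `j` received by player `i` at round `t` under trading post. -/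
noncomputable def tpY {n : ℕ} (x : ℕ → Fin n → ℝ) (b : ℕ → Fin n → Fin n → ℝ)
    (t : ℕ) (i j : Fin n) : ℝ :=
  if 0 < b t i j then (b t i j / ∑ k, b t k j) * x t j else 0

/-- Budget of a player: `B i (t+1) = ∑ k, b t k i`. -/
noncomputable def tpBudget {n : ℕ} (b : ℕ → Fin n → Fin n → ℝ) : ℕ → Fin n → ℝ
  | 0, i => ∑ j, b 0 i j
  | t + 1, i => ∑ k, b t k i

/-- Trading post with proportional bid updates. -/
def TPDynamics {n : ℕ} (a : Fin n → Fin n → ℝ) (x : ℕ → Fin n → ℝ)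
    (b : ℕ → Fin n → Fin n → ℝ) : Prop :=
  ∀ t, (∀ i, x (t + 1) i = ∑ j, a i j * tpY x b t i j) ∧
    (∀ i j, b (t + 1) i j = a i j * tpY x b t i j / x (t + 1) i * tpBudget b (t + 1) i)

/-- Non-degenerate starting configuration, with total money normalized to one. -/
def NonDegenerate {n : ℕ} (a : Fin n → Fin n → ℝ) (x : ℕ → Fin n → ℝ)
    (b : ℕ → Fin n → Fin n → ℝ) : Prop :=
  (∀ i, 0 < x 0 i) ∧ (∀ i j, 0 < b 0 i j ↔ 0 < a i j) ∧ (∑ i, ∑ j, b 0 i j) = 1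

/-!
A potential `w > 0` with `a v u * w u ≤ w v` makes `∑ v, x t v / w v` non-increasing under any
mechanism. Such a potential exists as soon as no cycle has product above one: take `w v` to be
the largest product of a walk ending at `v`, which is attained on walks without repeated vertices.
Scaling every edge `j → v` with `v ≠ i` by `1 / r`, where `1 - ε ≤ r < 1`, keeps every cycle
product at most one, because `C` uses only the edge `j → i` out of `j` and every other cycle uses
at most one edge out of `j` and has product at most `r`. The resulting potential makes the sum
drop by a fixed multiple of `(1 - β t i j) * x t j` in every round, so this quantity tends to zero;
along the rounds with `β t i j < γ` it dominates `(1 - γ) * β t i j * x t j`.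
-/

open Topology

theorem List.exists_eq_append_cons_append_cons_of_not_nodup {α : Type*} :
    ∀ {l : List α}, ¬ l.Nodup →
      ∃ p x q r, l = p ++ x :: (q ++ x :: r) ∧ (x :: q).Nodup
  | [], h => absurd List.nodup_nil h
  | y :: t, h => by
    by_cases ht : t.Nodup
    · have hy : y ∈ t := by_contra fun hy => h (List.nodup_cons.mpr ⟨hy, ht⟩)
      obtain ⟨q, r, rfl⟩ := List.append_of_mem hy
      have hqr := List.nodup_append'.mp ht
      exact ⟨[], y, q, r, rfl, List.nodup_cons.mpr
        ⟨fun hyq => hqr.2.2 hyq List.mem_cons_self, hqr.1⟩⟩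
    · obtain ⟨p, x, q, r, rfl, hxq⟩ := exists_eq_append_cons_append_cons_of_not_nodup ht
      exact ⟨y :: p, x, q, r, rfl, hxq⟩

variable {n : ℕ}

noncomputable def walkProd (g : Fin n → Fin n → ℝ) : List (Fin n) → ℝ
  | [] => 1
  | [_] => 1
  | u :: v :: l => g v u * walkProd g (v :: l)

section Walks

variable (g : Fin n → Fin n → ℝ)

@[simp] theorem walkProd_singleton (v : Fin n) : walkProd g [v] = 1 := rfl

@[simp] theorem walkProd_cons_cons (u v : Fin n) (l : List (Fin n)) :
    walkProd g (u :: v :: l) = g v u * walkProd g (v :: l) := rfl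

theorem walkProd_nonneg (hg : ∀ u v, 0 ≤ g u v) : ∀ l : List (Fin n), 0 ≤ walkProd g l
  | [] => zero_le_one
  | [_] => zero_le_one
  | _ :: v :: l => mul_nonneg (hg _ _) (walkProd_nonneg hg (v :: l))

theorem walkProd_append_cons :
    ∀ (s : List (Fin n)) (x : Fin n) (t : List (Fin n)),
      walkProd g (s ++ x :: t) = walkProd g (s ++ [x]) * walkProd g (x :: t)
  | [], _, _ => by simp
  | [_], _, _ => by simp
  | y :: z :: s, x, t => by
    have h := walkProd_append_cons (z :: s) x t
    simp only [List.cons_append, walkProd_cons_cons] at h ⊢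
    rw [h, mul_assoc]

theorem walkProd_eq_prod : ∀ l : List (Fin n),
    walkProd g l = ∏ m : Fin (l.length - 1),
      g (l.get ⟨(m : ℕ) + 1, by omega⟩) (l.get ⟨(m : ℕ), by omega⟩)
  | [] => by simp [walkProd]
  | [_] => by simp
  | u :: v :: l => by
    rw [walkProd_cons_cons, walkProd_eq_prod (v :: l)]
    simp only [List.length_cons, Nat.succ_sub_one]
    rw [Fin.prod_univ_succ]
    rfl

theorem cycleEdgeProd_cons (x : Fin n) (q : List (Fin n)) :
    cycleEdgeProd (x :: q) g = walkProd g (x :: q ++ [x]) := by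
  rw [walkProd_eq_prod, cycleEdgeProd]
  refine Fintype.prod_equiv (finCongr (by simp)) _ _ fun m => ?_
  have hm : (m : ℕ) < (x :: q).length := m.isLt
  simp only [List.get_eq_getElem, finCongr_apply, Fin.val_cast]
  congr 1
  · by_cases h : (m : ℕ) + 1 < (x :: q).length
    · rw [List.getElem_append_left h]
      simp [Nat.mod_eq_of_lt (show (m : ℕ) + 1 < q.length + 1 by simpa using h)]
    · have h1 : (m : ℕ) + 1 = (x :: q).length := by omega
      rw [List.getElem_append_right (by omega)]
      simp [h1]
  · rw [List.getElem_append_left hm]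

theorem cycleEdgeProd_mul (C : List (Fin n)) (h : Fin n → Fin n → ℝ) :
    cycleEdgeProd C (fun v u => g v u * h v u) = cycleEdgeProd C g * cycleEdgeProd C h :=
  Finset.prod_mul_distrib

open Fin.NatCast in
theorem cycleEdgeProd_rotate (l : List (Fin n)) (k : ℕ) :
    cycleEdgeProd (l.rotate k) g = cycleEdgeProd l g := by
  rcases eq_or_ne l [] with rfl | hl
  · simp
  have : NeZero l.length := ⟨(List.length_pos_iff.mpr hl).ne'⟩
  set kf : Fin l.length := (k : Fin l.length) with hkf
  refine (Fintype.prod_equiv ((Equiv.subRight kf).trans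
    (finCongr (List.length_rotate l k).symm)) _ _ fun m => ?_).symm
  have hshift : (((m - kf : Fin l.length) : ℕ) + k) % l.length = m := by
    have h := Fin.val_add (m - kf) kf
    rwa [sub_add_cancel, hkf, Fin.val_natCast, Nat.add_mod_mod, eq_comm] at h
  have hshift_succ : ((((m - kf : Fin l.length) : ℕ) + 1) % l.length + k) % l.length
      = ((m : ℕ) + 1) % l.length := by
    rw [Nat.mod_add_mod, add_right_comm, ← Nat.mod_add_mod, hshift]
  rw [List.get_rotate, List.get_rotate]
  congr 2 <;> apply Fin.ext
  · simpa using hshift_succ.symm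
  · exact hshift.symm

theorem exists_nodup_walkProd_le (hg : ∀ u v, 0 ≤ g u v)
    (hcyc : ∀ D : List (Fin n), IsCycle D → cycleEdgeProd D g ≤ 1)
    (l : List (Fin n)) (v : Fin n) :
    ∃ l' : List (Fin n), l'.Nodup ∧ walkProd g (l ++ [v]) ≤ walkProd g (l' ++ [v]) := by
  by_cases hl : l.Nodup
  · exact ⟨l, hl, le_rfl⟩
  obtain ⟨p, x, q, s, hpqs, hxq⟩ := List.exists_eq_append_cons_append_cons_of_not_nodup hl
  obtain ⟨l', hl', hle⟩ := exists_nodup_walkProd_le hg hcyc (p ++ x :: s) v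
  subst hpqs
  have hloop : walkProd g (x :: q ++ [x]) ≤ 1 :=
    cycleEdgeProd_cons g x q ▸ hcyc _ ⟨List.cons_ne_nil _ _, hxq⟩
  refine ⟨l', hl', ?_⟩
  calc walkProd g (p ++ x :: (q ++ x :: s) ++ [v])
      = walkProd g (p ++ [x]) *
          (walkProd g (x :: q ++ [x]) * walkProd g (x :: (s ++ [v]))) := by
        simp only [List.append_assoc, List.cons_append]
        rw [walkProd_append_cons, ← List.cons_append, walkProd_append_cons g (x :: q)]
        rfl
    _ ≤ walkProd g (p ++ [x]) * walkProd g (x :: (s ++ [v])) :=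
        mul_le_mul_of_nonneg_left
          (mul_le_of_le_one_left (walkProd_nonneg g hg _) hloop) (walkProd_nonneg g hg _)
    _ = walkProd g (p ++ x :: (s ++ [v])) := (walkProd_append_cons g p x _).symm
    _ ≤ walkProd g (l' ++ [v]) := by rwa [List.append_assoc, List.cons_append] at hle
termination_by l.length
decreasing_by rw [hpqs]; simp only [List.length_append, List.length_cons]; omega

theorem exists_potential_of_cycleEdgeProd_le_one (hg : ∀ u v, 0 ≤ g u v)
    (hcyc : ∀ D : List (Fin n), IsCycle D → cycleEdgeProd D g ≤ 1) :
    ∃ w : Fin n → ℝ, (∀ v, 0 < w v) ∧ ∀ u v, g v u * w u ≤ w v := by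
  have : Nonempty {l : List (Fin n) // l.Nodup} := ⟨⟨[], List.nodup_nil⟩⟩
  let w : Fin n → ℝ := fun v => ⨆ l : {l : List (Fin n) // l.Nodup}, walkProd g (l.1 ++ [v])
  have hle : ∀ v (l : {l : List (Fin n) // l.Nodup}), walkProd g (l.1 ++ [v]) ≤ w v :=
    fun v l => le_ciSup (f := fun l : {l : List (Fin n) // l.Nodup} =>
      walkProd g (l.1 ++ [v])) (Set.finite_range _).bddAbove l
  refine ⟨w, fun v => one_pos.trans_le (by simpa using hle v ⟨[], List.nodup_nil⟩),
    fun u v => ?_⟩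
  rw [Real.mul_iSup_of_nonneg (hg v u)]
  refine ciSup_le fun l => ?_
  obtain ⟨l', hl', hle'⟩ := exists_nodup_walkProd_le g hg hcyc (l.1 ++ [u]) v
  calc g v u * walkProd g (l.1 ++ [u])
      = walkProd g (l.1 ++ [u] ++ [v]) := by
        rw [List.append_assoc, List.singleton_append, walkProd_append_cons g l.1 u [v],
          walkProd_cons_cons, walkProd_singleton, mul_one, mul_comm]
    _ ≤ walkProd g (l' ++ [v]) := hle'
    _ ≤ w v := hle v ⟨l', hl'⟩

end Walks

theorem IsEdgeOf.of_rotate {l : List (Fin n)} {k : ℕ} {u v : Fin n}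
    (h : IsEdgeOf (l.rotate k) u v) : IsEdgeOf l u v := by
  obtain ⟨m, hmv, hmu⟩ := h
  have hL : 0 < l.length := by simpa using m.pos
  refine ⟨⟨((m : ℕ) + k) % l.length, Nat.mod_lt _ hL⟩, by rw [← hmv, List.get_rotate], ?_⟩
  rw [← hmu, List.get_rotate]
  congr 1
  ext
  simp only [List.length_rotate, Nat.mod_add_mod, add_right_comm]

theorem IsEdgeOf.eq_of_nodup {C : List (Fin n)} (hC : C.Nodup) {i₁ i₂ j : Fin n}
    (h₁ : IsEdgeOf C i₁ j) (h₂ : IsEdgeOf C i₂ j) : i₁ = i₂ := by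
  obtain ⟨m₁, hm₁, rfl⟩ := h₁
  obtain ⟨m₂, hm₂, rfl⟩ := h₂
  obtain rfl : m₁ = m₂ := hC.get_inj_iff.mp (hm₁.trans hm₂.symm)
  rfl

def edgeScale (i j : Fin n) (κ : ℝ) : Fin n → Fin n → ℝ :=
  fun v u => if u = j ∧ v ≠ i then κ else 1

section EdgeScale

variable {i j : Fin n} {κ : ℝ} {C : List (Fin n)}

theorem one_le_edgeScale (hκ : 1 ≤ κ) (v u : Fin n) : 1 ≤ edgeScale i j κ v u := by
  unfold edgeScale; split_ifs <;> linarith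

theorem cycleEdgeProd_edgeScale_le (hC : C.Nodup) (hκ : 1 ≤ κ) :
    cycleEdgeProd C (edgeScale i j κ) ≤ κ := by
  unfold cycleEdgeProd edgeScale
  by_cases hj : ∃ m, C.get m = j
  · obtain ⟨m₀, hm₀⟩ := hj
    rw [Finset.prod_eq_single m₀
      (fun m _ hm => if_neg fun h => hm (hC.get_inj_iff.mp (h.1.trans hm₀.symm))) (by simp)]
    split_ifs <;> linarith
  · rw [Finset.prod_eq_one fun m _ => if_neg fun h => hj ⟨m, h.1⟩]
    exact hκ

theorem cycleEdgeProd_edgeScale_eq_one (h : ∀ v, IsEdgeOf C v j → v = i) :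
    cycleEdgeProd C (edgeScale i j κ) = 1 :=
  Finset.prod_eq_one fun m _ => if_neg fun hm => hm.2 (h _ ⟨m, hm.1, rfl⟩)

end EdgeScale

theorem exists_potential_of_cycleProd_le {a : Fin n → Fin n → ℝ} (ha : Nonneg a)
    {C : List (Fin n)} (hC : C.Nodup) (hCprod : cycleProd a C ≤ 1) {r : ℝ} (hr0 : 0 < r)
    (hr1 : r ≤ 1) (hother : ∀ C' : List (Fin n), IsCycle C' → ¬ C'.IsRotated C →
      cycleProd a C' ≤ r)
    {i j : Fin n} (hij : IsEdgeOf C i j) :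
    ∃ w : Fin n → ℝ, (∀ v, 0 < w v) ∧ (∀ u v, a v u * w u ≤ w v) ∧
      ∀ v, v ≠ i → a v j * w j ≤ r * w v := by
  have hκ : 1 ≤ r⁻¹ := (one_le_inv₀ hr0).mpr hr1
  have hscale := one_le_edgeScale (i := i) (j := j) hκ
  have hcyc : ∀ D : List (Fin n), IsCycle D →
      cycleEdgeProd D (fun v u => a v u * edgeScale i j r⁻¹ v u) ≤ 1 := by
    intro D hD
    rw [cycleEdgeProd_mul]
    by_cases hrot : D.IsRotated C
    · obtain ⟨k, rfl⟩ := hrot.symm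
      rw [cycleEdgeProd_rotate, mul_comm,
        cycleEdgeProd_edgeScale_eq_one fun v hv => hv.of_rotate.eq_of_nodup hC hij, one_mul]
      exact hCprod
    · calc cycleEdgeProd D a * cycleEdgeProd D (edgeScale i j r⁻¹) ≤ r * r⁻¹ :=
            mul_le_mul (hother D hD hrot) (cycleEdgeProd_edgeScale_le hD.2 hκ)
              (Finset.prod_nonneg fun m _ => zero_le_one.trans (hscale _ _)) hr0.le
        _ = 1 := mul_inv_cancel₀ hr0.ne'
  obtain ⟨w, hw0, hw⟩ := exists_potential_of_cycleEdgeProd_le_one _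
    (fun v u => mul_nonneg (ha v u) (zero_le_one.trans (hscale v u))) hcyc
  refine ⟨w, hw0, fun u v => le_trans ?_ (hw u v), fun v hv => ?_⟩
  · exact mul_le_mul_of_nonneg_right (le_mul_of_one_le_right (ha v u) (hscale v u)) (hw0 u).le
  · have h := hw j v
    simp only [edgeScale, hv, ne_eq, not_false_eq_true, and_self, if_true] at h
    calc a v j * w j = r * (a v j * r⁻¹ * w j) := by field_simp
      _ ≤ r * w v := mul_le_mul_of_nonneg_left h hr0.le

theorem sum_mul_mul_div_le {c b w θ : Fin n → ℝ} {y w₀ : ℝ} (hb : ∀ v, 0 ≤ b v) (hy : 0 ≤ y)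
    (hw₀ : 0 < w₀) (hw : ∀ v, 0 < w v) (hcw : ∀ v, c v * w₀ ≤ θ v * w v) :
    ∑ v, c v * b v * y / w v ≤ (∑ v, θ v * b v) * (y / w₀) := by
  rw [Finset.sum_mul]
  refine Finset.sum_le_sum fun v _ => ?_
  have hby : 0 ≤ b v * y / (w₀ * w v) :=
    div_nonneg (mul_nonneg (hb v) hy) (mul_pos hw₀ (hw v)).le
  have h₀ := hw₀.ne'
  have h₁ := (hw v).ne'
  calc c v * b v * y / w v = c v * w₀ * (b v * y / (w₀ * w v)) := by field_simp
    _ ≤ θ v * w v * (b v * y / (w₀ * w v)) := mul_le_mul_of_nonneg_right (hcw v) hby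
    _ = θ v * b v * (y / w₀) := by field_simp

section Mechanism

variable {a : Fin n → Fin n → ℝ} {β : ℕ → Fin n → Fin n → ℝ} {x : ℕ → Fin n → ℝ}

theorem IsMechanism.le_one (hβ : IsMechanism β) (t : ℕ) (i j : Fin n) : β t i j ≤ 1 :=
  (Finset.single_le_sum (fun v _ => hβ.1 t v j) (Finset.mem_univ i)).trans (hβ.2 t j)

theorem IsMechanism.sum_ite_mul_le (hβ : IsMechanism β) {r : ℝ} (hr : 0 ≤ r) (t : ℕ)
    (i j : Fin n) :
    ∑ v, (if v = i then 1 else r) * β t v j ≤ 1 - (1 - r) * (1 - β t i j) := by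
  have hsplit : ∑ v, (if v = i then 1 else r) * β t v j
      = β t i j + r * ∑ v ∈ Finset.univ.erase i, β t v j := by
    rw [← Finset.add_sum_erase _ _ (Finset.mem_univ i), if_pos rfl, one_mul, Finset.mul_sum]
    exact congrArg _ (Finset.sum_congr rfl fun v hv => by rw [if_neg (Finset.ne_of_mem_erase hv)])
  have hrest : ∑ v ∈ Finset.univ.erase i, β t v j ≤ 1 - β t i j := by
    linarith [hβ.2 t j, Finset.add_sum_erase _ (β t · j) (Finset.mem_univ i)]
  rw [hsplit]
  nlinarith [mul_le_mul_of_nonneg_left hrest hr]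

theorem MechEvolution.nonneg (ha : Nonneg a) (hβ : IsMechanism β) (hev : MechEvolution a β x)
    (hx0 : ∀ v, 0 ≤ x 0 v) : ∀ t v, 0 ≤ x t v
  | 0 => hx0
  | t + 1 => fun v => by
    rw [hev]
    exact Finset.sum_nonneg fun u _ =>
      mul_nonneg (mul_nonneg (ha v u) (hβ.1 t v u)) (hev.nonneg ha hβ hx0 t u)

theorem MechEvolution.sum_div_succ_add_le (hev : MechEvolution a β x) (hβ : IsMechanism β)
    {t : ℕ} (hx : ∀ v, 0 ≤ x t v) {w : Fin n → ℝ} (hw0 : ∀ v, 0 < w v)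
    (hw : ∀ u v, a v u * w u ≤ w v) {r : ℝ} (hr0 : 0 ≤ r) {i j : Fin n}
    (hslack : ∀ v, v ≠ i → a v j * w j ≤ r * w v) :
    ∑ v, x (t + 1) v / w v + (1 - r) / w j * ((1 - β t i j) * x t j) ≤ ∑ v, x t v / w v := by
  have hexpand : ∑ v, x (t + 1) v / w v = ∑ u, ∑ v, a v u * β t v u * x t u / w v := by
    simp_rw [hev t, Finset.sum_div]
    exact Finset.sum_comm
  have hout : ∀ u, ∑ v, a v u * β t v u * x t u / w v ≤ x t u / w u := fun u =>
    calc _ ≤ (∑ v, 1 * β t v u) * (x t u / w u) :=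
          sum_mul_mul_div_le (hβ.1 t · u) (hx u) (hw0 u) hw0 (by simpa using (hw u ·))
      _ ≤ x t u / w u := mul_le_of_le_one_left (div_nonneg (hx u) (hw0 u).le)
          (by simpa using hβ.2 t u)
  have hout_j : ∑ v, a v j * β t v j * x t j / w v
      ≤ x t j / w j - (1 - r) / w j * ((1 - β t i j) * x t j) := by
    have hxj := div_nonneg (hx j) (hw0 j).le
    calc _ ≤ (∑ v, (if v = i then 1 else r) * β t v j) * (x t j / w j) := by
          refine sum_mul_mul_div_le (hβ.1 t · j) (hx j) (hw0 j) hw0 fun v => ?_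
          split_ifs with h
          · simpa using hw j v
          · exact hslack v h
      _ ≤ (1 - (1 - r) * (1 - β t i j)) * (x t j / w j) :=
          mul_le_mul_of_nonneg_right (hβ.sum_ite_mul_le hr0 t i j) hxj
      _ = _ := by ring
  rw [hexpand, ← Finset.add_sum_erase _ _ (Finset.mem_univ j),
    ← Finset.add_sum_erase _ (fun v => x t v / w v) (Finset.mem_univ j)]
  have := Finset.sum_le_sum fun u (_ : u ∈ Finset.univ.erase j) => hout u
  linarith

end Mechanism

theorem tendsto_zero_of_add_mul_le {S d : ℕ → ℝ} {c : ℝ} (hc : 0 < c) (hS : ∀ t, 0 ≤ S t)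
    (hd : ∀ t, 0 ≤ d t) (h : ∀ t, S (t + 1) + c * d t ≤ S t) :
    Tendsto d atTop (𝓝 0) := by
  have hanti : Antitone S :=
    antitone_nat_of_succ_le fun t => by nlinarith [h t, mul_nonneg hc.le (hd t)]
  have hlim := tendsto_atTop_ciInf hanti ⟨0, by rintro _ ⟨t, rfl⟩; exact hS t⟩
  have hlim_succ : Tendsto (fun t => S (t + 1)) atTop _ := hlim.comp (tendsto_add_atTop_nat 1)
  have hdiff := (hlim.sub hlim_succ).div_const c
  rw [sub_self, zero_div] at hdiff
  refine squeeze_zero hd (fun t => ?_) hdiff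
  rw [le_div_iff₀ hc]
  linarith [h t]

theorem bad_split_subsequence_vanishes_general
    {n : ℕ} (a : Fin n → Fin n → ℝ) (ha : Nonneg a)
    (β : ℕ → Fin n → Fin n → ℝ) (x : ℕ → Fin n → ℝ)
    (hβ : IsMechanism β) (hx0 : ∀ i, 0 < x 0 i) (hev : MechEvolution a β x)
    (C : List (Fin n)) (hC : IsCycle C) (hCprod : cycleProd a C = 1)
    (ε : ℝ) (hε : 0 < ε)
    (hother : ∀ C' : List (Fin n), IsCycle C' → ¬ C'.IsRotated C →
      cycleProd a C' ≤ 1 - ε)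
    (i j : Fin n) (hij : IsEdgeOf C i j)
    (γ : ℝ) (hγ1 : γ < 1)
    (hinf : ∀ T : ℕ, ∃ t, T ≤ t ∧ β t i j < γ) :
    ∃ φ : ℕ → ℕ, StrictMono φ ∧
      Tendsto (fun m => β (φ m) i j * x (φ m) j) atTop (nhds 0) := by
  set r : ℝ := max (1 - ε) 2⁻¹
  have hr0 : 0 < r := lt_max_of_lt_right (by norm_num)
  have hr1 : r < 1 := max_lt (by linarith) (by norm_num)
  obtain ⟨w, hw0, hw, hslack⟩ := exists_potential_of_cycleProd_le ha hC.2 hCprod.le hr0 hr1.le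
    (fun D hD hrot => (hother D hD hrot).trans (le_max_left _ _)) hij
  have hx := hev.nonneg ha hβ fun v => (hx0 v).le
  have hvanish : Tendsto (fun t => (1 - β t i j) * x t j) atTop (𝓝 0) :=
    tendsto_zero_of_add_mul_le (div_pos (sub_pos.2 hr1) (hw0 j))
      (fun t => Finset.sum_nonneg fun v _ => div_nonneg (hx t v) (hw0 v).le)
      (fun t => mul_nonneg (sub_nonneg.2 (hβ.le_one t i j)) (hx t j))
      (fun t => hev.sum_div_succ_add_le hβ (hx t) hw0 hw hr0.le hslack)
  obtain ⟨φ, hφ, hφbad⟩ := extraction_of_frequently_atTop (frequently_atTop.2 hinf)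
  have hγ : 0 < 1 - γ := sub_pos.2 hγ1
  refine ⟨φ, hφ, squeeze_zero (fun m => mul_nonneg (hβ.1 _ i j) (hx _ j)) (fun m => ?_)
    (by simpa using (hvanish.comp hφ.tendsto_atTop).div_const (1 - γ))⟩
  calc β (φ m) i j * x (φ m) j ≤ x (φ m) j := mul_le_of_le_one_left (hx _ j) (hβ.le_one _ i j)
    _ ≤ (1 - β (φ m) i j) * x (φ m) j / (1 - γ) := by
      rw [le_div_iff₀ hγ]
      nlinarith [hx (φ m) j, hφbad m]

/-- Under an arbitrary mechanism, if the unique best cycle `C` has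
product exactly `1` while every other cycle has product at most `1 - ε`, and along an
edge `(j, i)` of `C` player `i` infinitely often receives less than a `γ < 1` fraction of
good `j`, then along some subsequence of rounds the amount received by `i` from `j`
tends to zero. -/
theorem bad_split_subsequence_vanishes
    {n : ℕ} (a : Fin n → Fin n → ℝ) (ha : Nonneg a)
    (β : ℕ → Fin n → Fin n → ℝ) (x : ℕ → Fin n → ℝ)
    (hβ : IsMechanism β) (hx0 : ∀ i, 0 < x 0 i) (hev : MechEvolution a β x)
    (C : List (Fin n)) (hC : IsCycle C) (hCprod : cycleProd a C = 1)
    (ε : ℝ) (hε : 0 < ε)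
    (hother : ∀ C' : List (Fin n), IsCycle C' → ¬ C'.IsRotated C →
      cycleProd a C' ≤ 1 - ε)
    (i j : Fin n) (hij : IsEdgeOf C i j)
    (γ : ℝ) (hγ0 : 0 ≤ γ) (hγ1 : γ < 1)
    (hinf : ∀ T : ℕ, ∃ t, T ≤ t ∧ β t i j < γ) :
    ∃ φ : ℕ → ℕ, StrictMono φ ∧
      Tendsto (fun m => β (φ m) i j * x (φ m) j) atTop (nhds 0) :=
  bad_split_subsequence_vanishes_general a ha β x hβ hx0 hev C hC hCprod ε hε hother i j hij γ hγ1
    hinf
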